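/- arXiv:1809.10771 — 3 statements merged into one kernel-verified Lean document; each statement's English description precedes it below -/
import Mathlib

section
/- Let f: ℝ^n → ℝ^m be piecewise affine: there exist finitely many pieces, each piece being a set {y : H_i y ≤ h_i} on which f(z) = S_i z + s_i, whose union is ℝ^n. If f is continuous, then f is globally Lipschitz with Lipschitz constant L = max_i ‖S_i‖. -/
open Matrix Set

/-- A continuous piecewise-affine function, whose polyhedral pieces cover `ℝⁿ`, is globally
Lipschitz with constant `L = max_i ‖S_i‖` (spectral norms of the affine pieces). -/
theorem stmt7 (n m l : ℕ) (hl : 0 < l) (q : Fin l → ℕ)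
    (H : (i : Fin l) → Matrix (Fin (q i)) (Fin n) ℝ)
    (h : (i : Fin l) → Fin (q i) → ℝ)
    (S : Fin l → Matrix (Fin m) (Fin n) ℝ) (s : Fin l → Fin m → ℝ)
    (f : (Fin n → ℝ) → (Fin m → ℝ))
    (hpiece : ∀ i : Fin l, ∀ z : Fin n → ℝ,
      (∀ j, ((H i) *ᵥ z) j ≤ h i j) → ∀ k, f z k = ((S i) *ᵥ z) k + s i k)
    (hcover : ∀ z : Fin n → ℝ, ∃ i : Fin l, ∀ j, ((H i) *ᵥ z) j ≤ h i j)
    (hcont : Continuous f) :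
    ∀ z₁ z₂ : Fin n → ℝ,
      Real.sqrt (∑ k, (f z₁ k - f z₂ k) ^ 2) ≤
        (⨆ i : Fin l,
          ‖LinearMap.toContinuousLinearMap
            ((Matrix.toEuclideanLin (S i)) :
              EuclideanSpace ℝ (Fin n) →ₗ[ℝ] EuclideanSpace ℝ (Fin m))‖) *
          Real.sqrt (∑ j, (z₁ j - z₂ j) ^ 2) := by
  intro z₁ z₂
  haveI : Nonempty (Fin l) := ⟨⟨0, hl⟩⟩
  set L := ⨆ i : Fin l,
      ‖LinearMap.toContinuousLinearMap
        ((Matrix.toEuclideanLin (S i)) :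
          EuclideanSpace ℝ (Fin n) →ₗ[ℝ] EuclideanSpace ℝ (Fin m))‖ with hLdef
  have hL : ∀ i : Fin l, ‖LinearMap.toContinuousLinearMap
      ((Matrix.toEuclideanLin (S i)) :
        EuclideanSpace ℝ (Fin n) →ₗ[ℝ] EuclideanSpace ℝ (Fin m))‖ ≤ L :=
    fun i => by
      rw [hLdef]
      exact le_ciSup (f := fun i : Fin l => ‖LinearMap.toContinuousLinearMap
        ((Matrix.toEuclideanLin (S i)) :
          EuclideanSpace ℝ (Fin n) →ₗ[ℝ] EuclideanSpace ℝ (Fin m))‖)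
        (Set.Finite.bddAbove (Set.finite_range _)) i
  have hL0 : (0:ℝ) ≤ L := le_trans (norm_nonneg _) (hL ⟨0, hl⟩)
  set w := z₂ - z₁ with hw
  set u : ℝ → (Fin n → ℝ) := fun t => z₁ + t • w with hu
  set g : ℝ → EuclideanSpace ℝ (Fin m) :=
    fun t => (EuclideanSpace.equiv (Fin m) ℝ).symm (f (u t)) with hg
  set D := dist ((EuclideanSpace.equiv (Fin n) ℝ).symm z₁)
      ((EuclideanSpace.equiv (Fin n) ℝ).symm z₂) with hD
  have hD0 : (0:ℝ) ≤ D := dist_nonneg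
  have hdist_u : ∀ t t' : ℝ,
      dist ((EuclideanSpace.equiv (Fin n) ℝ).symm (u t))
        ((EuclideanSpace.equiv (Fin n) ℝ).symm (u t')) = |t - t'| * D := by
    intro t t'
    have h1 : (EuclideanSpace.equiv (Fin n) ℝ).symm (u t)
        - (EuclideanSpace.equiv (Fin n) ℝ).symm (u t')
        = (t - t') • ((EuclideanSpace.equiv (Fin n) ℝ).symm z₂
            - (EuclideanSpace.equiv (Fin n) ℝ).symm z₁) := by
      rw [← map_sub, ← map_sub, ← _root_.map_smul]
      congr 1
      simp only [hu, hw]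
      module
    rw [dist_eq_norm, h1, norm_smul, Real.norm_eq_abs, ← dist_eq_norm, dist_comm, hD]
  have hpieceb : ∀ i : Fin l, ∀ t t' : ℝ,
      (∀ j, (H i *ᵥ u t) j ≤ h i j) → (∀ j, (H i *ᵥ u t') j ≤ h i j) →
      dist (g t) (g t') ≤ L * (|t - t'| * D) := by
    intro i t t' ht ht'
    have hft : f (u t) = fun k => (S i *ᵥ u t) k + s i k := funext (hpiece i _ ht)
    have hft' : f (u t') = fun k => (S i *ᵥ u t') k + s i k := funext (hpiece i _ ht')
    have h2 : g t - g t' =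
        (LinearMap.toContinuousLinearMap
          ((Matrix.toEuclideanLin (S i)) :
            EuclideanSpace ℝ (Fin n) →ₗ[ℝ] EuclideanSpace ℝ (Fin m)))
          ((EuclideanSpace.equiv (Fin n) ℝ).symm (u t)
            - (EuclideanSpace.equiv (Fin n) ℝ).symm (u t')) := by
      simp only [hg]
      rw [← map_sub, ← map_sub]
      have h3 : f (u t) - f (u t') = S i *ᵥ (u t - u t') := by
        rw [hft, hft']
        funext k
        simp [Matrix.mulVec_sub]
      rw [h3]
      rfl
    calc dist (g t) (g t') = ‖g t - g t'‖ := dist_eq_norm _ _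
      _ ≤ ‖LinearMap.toContinuousLinearMap
            ((Matrix.toEuclideanLin (S i)) :
              EuclideanSpace ℝ (Fin n) →ₗ[ℝ] EuclideanSpace ℝ (Fin m))‖ *
          ‖(EuclideanSpace.equiv (Fin n) ℝ).symm (u t)
            - (EuclideanSpace.equiv (Fin n) ℝ).symm (u t')‖ := by
          rw [h2]; exact ContinuousLinearMap.le_opNorm _ _
      _ ≤ L * (|t - t'| * D) := by
          rw [← dist_eq_norm, hdist_u]
          exact mul_le_mul (hL i) le_rfl (by positivity) hL0
  set C := L * D with hC
  set A : Set ℝ := Icc (0:ℝ) 1 ∩ {t | dist (g t) (g 0) ≤ C * t} with hA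
  have hucont : Continuous u := continuous_const.add (continuous_id.smul continuous_const)
  have hgcont : Continuous g :=
    (EuclideanSpace.equiv (Fin m) ℝ).symm.continuous.comp (hcont.comp hucont)
  have hAclosed : IsClosed A :=
    IsClosed.inter isClosed_Icc
      (isClosed_le (hgcont.dist continuous_const) (continuous_const.mul continuous_id))
  have h0A : (0:ℝ) ∈ A := ⟨⟨le_rfl, zero_le_one⟩, by simp⟩
  have hbdd : BddAbove A := ⟨1, fun t ht => ht.1.2⟩
  set c := sSup A with hcdef
  have hcA : c ∈ A := hAclosed.csSup_mem ⟨0, h0A⟩ hbdd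
  have hc1 : c ≤ 1 := hcA.1.2
  have final : (1:ℝ) ∈ A := by
    by_contra h1A
    have hclt : c < 1 := lt_of_le_of_ne hc1 (fun e => h1A (e ▸ hcA))
    have hsub : Ioc c 1 ⊆
        ⋃ i : Fin l, {t | t ∈ Ioc c 1 ∧ ∀ j, (H i *ᵥ u t) j ≤ h i j} := by
      intro t ht
      obtain ⟨i, hi⟩ := hcover (u t)
      exact mem_iUnion.2 ⟨i, ht, hi⟩
    have hcc : c ∈ closure (Ioc c 1) := by
      rw [closure_Ioc hclt.ne]
      exact ⟨le_rfl, hclt.le⟩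
    have hmem := closure_mono hsub hcc
    rw [closure_iUnion_of_finite] at hmem
    obtain ⟨i, hi⟩ := mem_iUnion.1 hmem
    have hHcont : ∀ j, Continuous fun t : ℝ => (H i *ᵥ u t) j := by
      intro j
      have hv : Continuous fun v : Fin n → ℝ => (H i *ᵥ v) j := by
        simp only [Matrix.mulVec, dotProduct]
        exact continuous_finset_sum _ fun k _ => continuous_const.mul (continuous_apply k)
      exact hv.comp hucont
    have hclosed_i : IsClosed {t : ℝ | ∀ j, (H i *ᵥ u t) j ≤ h i j} := by
      have he : {t : ℝ | ∀ j, (H i *ᵥ u t) j ≤ h i j}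
          = ⋂ j, {t : ℝ | (H i *ᵥ u t) j ≤ h i j} := by
        ext t; simp [mem_iInter]
      rw [he]
      exact isClosed_iInter fun j => isClosed_le (hHcont j) continuous_const
    have hci : ∀ j, (H i *ᵥ u c) j ≤ h i j := by
      have hsubset : {t | t ∈ Ioc c 1 ∧ ∀ j, (H i *ᵥ u t) j ≤ h i j}
          ⊆ {t : ℝ | ∀ j, (H i *ᵥ u t) j ≤ h i j} := fun t ht => ht.2
      exact hclosed_i.closure_subset (closure_mono hsubset hi)
    obtain ⟨t', ht'mem, ht'P⟩ :
        ∃ t', t' ∈ Ioc c 1 ∧ ∀ j, (H i *ᵥ u t') j ≤ h i j := by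
      obtain ⟨t', ht'⟩ := closure_nonempty_iff.mp ⟨c, hi⟩
      exact ⟨t', ht'.1, ht'.2⟩
    have hmid : ∀ t ∈ Icc c t', ∀ j, (H i *ᵥ u t) j ≤ h i j := by
      intro t ht j
      have key : ∀ r : ℝ, (H i *ᵥ u r) j = (H i *ᵥ z₁) j + r * (H i *ᵥ w) j := by
        intro r
        simp only [hu, Matrix.mulVec_add, Matrix.mulVec_smul]
        simp [smul_eq_mul]
      have h1 := hci j
      have h2 := ht'P j
      rw [key] at h1 h2 ⊢
      rcases le_or_gt 0 ((H i *ᵥ w) j) with hb | hb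
      · nlinarith [ht.1, ht.2]
      · nlinarith [ht.1, ht.2]
    have ht'A : t' ∈ A := by
      refine ⟨⟨le_trans hcA.1.1 ht'mem.1.le, ht'mem.2⟩, ?_⟩
      have hb := hpieceb i t' c (hmid t' ⟨ht'mem.1.le, le_rfl⟩) (hmid c ⟨le_rfl, ht'mem.1.le⟩)
      calc dist (g t') (g 0) ≤ dist (g t') (g c) + dist (g c) (g 0) := dist_triangle _ _ _
        _ ≤ L * (|t' - c| * D) + C * c := add_le_add hb hcA.2
        _ = C * t' := by
            rw [abs_of_nonneg (sub_nonneg.2 ht'mem.1.le), hC]; ring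
    exact absurd (le_csSup hbdd ht'A) (not_le.2 ht'mem.1)
  have hu0 : u 0 = z₁ := by simp [hu]
  have hu1 : u 1 = z₂ := by simp [hu, hw]
  have e1 : Real.sqrt (∑ k, (f z₁ k - f z₂ k) ^ 2) = dist (g 0) (g 1) := by
    rw [hg]
    simp only [hu0, hu1]
    rw [EuclideanSpace.dist_eq]
    congr 1
    refine Finset.sum_congr rfl fun k _ => ?_
    rw [Real.dist_eq, sq_abs]
    rfl
  have e2 : Real.sqrt (∑ j, (z₁ j - z₂ j) ^ 2) = D := by
    rw [hD, EuclideanSpace.dist_eq]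
    congr 1
    refine Finset.sum_congr rfl fun j _ => ?_
    rw [Real.dist_eq, sq_abs]
    rfl
  have main : dist (g 1) (g 0) ≤ C * 1 := final.2
  rw [mul_one] at main
  rw [e1, e2, dist_comm]
  calc dist (g 1) (g 0) ≤ C := main
    _ = L * D := hC
end

section
/- Consider the energy function V(f, ω, α) = ½(f - f_∞)^T(f - f_∞) + ½ ω^T M ω + ½ α^T α along trajectories of the closed-loop system ḟ = Y_b D ω, M ω̇ = -E ω - D^T f + p* + α + α_DF, α̇_i = -α_i/T_i - ω_i + û_i for i ∈ I_u (α_i ≡ 0 otherwise), where D^T f_∞ = p*. If α_i û_i ≤ ε_i α_i² for all i, ω_i (α_DF)_i ≤ 0 for all i, and ε_i T_i < 1 for all i ∈ I_u, then V̇ ≤ -ω^T E ω - Σ_{i∈I_u}(1/T_i - ε_i) α_i² ≤ 0 along trajectories. -/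
open Matrix

/-- Energy decay along trajectories of the closed-loop system: with
`V(f,ω,α) = ½(f-f∞)ᵀ Y_b⁻¹ (f-f∞) + ½ ωᵀ M ω + ½ αᵀα`, under the stability-filter
condition `α_i û_i ≤ ε_i α_i²`, the sign condition `ω_i (α_DF)_i ≤ 0`, and `ε_i T_i < 1`,
one has `V̇ ≤ -ωᵀEω - Σ_{i∈Iu}(1/T_i - ε_i) α_i² ≤ 0`. Here `M`, `E`, `Y_b` are diagonal
with positive diagonals `Mv`, `Ev`, `Yv`, and `V̇` is written out componentwise. -/
theorem stmt10 (n m : ℕ)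
    (Yv : Fin m → ℝ) (hY : ∀ e, 0 < Yv e)
    (Mv Ev : Fin n → ℝ) (hM : ∀ i, 0 < Mv i) (hE : ∀ i, 0 < Ev i)
    (D : Matrix (Fin m) (Fin n) ℝ)
    (Iu : Finset (Fin n)) (Ti ε : Fin n → ℝ)
    (hT : ∀ i ∈ Iu, 0 < Ti i) (hε : ∀ i ∈ Iu, 0 < ε i)
    (hεT : ∀ i ∈ Iu, ε i * Ti i < 1)
    (pstar : Fin n → ℝ) (finf : Fin m → ℝ) (hinf : D.transpose *ᵥ finf = pstar)
    (f : Fin m → ℝ) (ω α αDF u : Fin n → ℝ)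
    (hαoff : ∀ i ∉ Iu, α i = 0)
    (hu : ∀ i, α i * u i ≤ ε i * α i ^ 2)
    (hDF : ∀ i, ω i * αDF i ≤ 0) :
    ((∑ e, (f e - finf e) * (1 / Yv e) * (Yv e * (D *ᵥ ω) e)) +
        (∑ i, ω i * Mv i *
          ((-(Ev i * ω i) - (D.transpose *ᵥ f) i + pstar i + α i + αDF i) / Mv i)) +
        (∑ i ∈ Iu, α i * (-(α i) / Ti i - ω i + u i))
      ≤ -(∑ i, Ev i * ω i ^ 2) - ∑ i ∈ Iu, (1 / Ti i - ε i) * α i ^ 2) ∧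
    (-(∑ i, Ev i * ω i ^ 2) - ∑ i ∈ Iu, (1 / Ti i - ε i) * α i ^ 2 ≤ 0) := by
  have hp : ∀ i, pstar i = ∑ e, D e i * finf e := by
    intro i
    rw [← hinf]
    simp [Matrix.mulVec, dotProduct, Matrix.transpose_apply]
  have h1 : (∑ e, (f e - finf e) * (1 / Yv e) * (Yv e * (D *ᵥ ω) e))
      = ∑ i, ((D.transpose *ᵥ f) i - pstar i) * ω i := by
    have h0 : ∀ e, (f e - finf e) * (1 / Yv e) * (Yv e * (D *ᵥ ω) e)
        = (f e - finf e) * (D *ᵥ ω) e := by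
      intro e
      have := (hY e).ne'
      field_simp
    calc (∑ e, (f e - finf e) * (1 / Yv e) * (Yv e * (D *ᵥ ω) e))
        = ∑ e, (f e - finf e) * (D *ᵥ ω) e :=
          Finset.sum_congr rfl (fun e _ => h0 e)
      _ = (f - finf) ⬝ᵥ (D *ᵥ ω) := by
          simp [dotProduct, Pi.sub_apply]
      _ = (D.transpose *ᵥ (f - finf)) ⬝ᵥ ω := by
          rw [Matrix.dotProduct_mulVec, Matrix.mulVec_transpose]
      _ = (D.transpose *ᵥ f - pstar) ⬝ᵥ ω := by
          rw [Matrix.mulVec_sub, hinf]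
      _ = ∑ i, ((D.transpose *ᵥ f) i - pstar i) * ω i := by
          simp [dotProduct, Pi.sub_apply]
  have h2 : (∑ i, ω i * Mv i *
        ((-(Ev i * ω i) - (D.transpose *ᵥ f) i + pstar i + α i + αDF i) / Mv i))
      = ∑ i, ω i * (-(Ev i * ω i) - (D.transpose *ᵥ f) i + pstar i + α i + αDF i) := by
    apply Finset.sum_congr rfl
    intro i _
    have := (hM i).ne'
    field_simp
  have h3 : ∑ i ∈ Iu, α i * ω i = ∑ i, α i * ω i := by
    apply Finset.sum_subset (Finset.subset_univ _)
    intro i _ hi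
    rw [hαoff i hi]; ring
  constructor
  · rw [h1, h2]
    have e1 : ∑ i ∈ Iu, α i * (-(α i) / Ti i - ω i + u i)
        = (∑ i ∈ Iu, (α i * u i - α i ^ 2 / Ti i)) - ∑ i ∈ Iu, α i * ω i := by
      rw [← Finset.sum_sub_distrib]
      apply Finset.sum_congr rfl
      intro i _; ring
    have key : (∑ i, ((D.transpose *ᵥ f) i - pstar i) * ω i) +
        (∑ i, ω i * (-(Ev i * ω i) - (D.transpose *ᵥ f) i + pstar i + α i + αDF i)) +
        (∑ i ∈ Iu, α i * (-(α i) / Ti i - ω i + u i))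
        = (∑ i, (-(Ev i * ω i ^ 2) + ω i * αDF i)) +
          (∑ i ∈ Iu, (α i * u i - α i ^ 2 / Ti i)) := by
      rw [e1, h3, ← Finset.sum_add_distrib]
      have e2 : (∑ i, (((D.transpose *ᵥ f) i - pstar i) * ω i +
            ω i * (-(Ev i * ω i) - (D.transpose *ᵥ f) i + pstar i + α i + αDF i))) -
            ∑ i, α i * ω i
          = ∑ i, (-(Ev i * ω i ^ 2) + ω i * αDF i) := by
        rw [← Finset.sum_sub_distrib]
        apply Finset.sum_congr rfl
        intro i _; ring
      linarith [e2]
    rw [key]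
    have b1 : (∑ i, (-(Ev i * ω i ^ 2) + ω i * αDF i)) ≤ -(∑ i, Ev i * ω i ^ 2) := by
      rw [← Finset.sum_neg_distrib]
      apply Finset.sum_le_sum
      intro i _
      nlinarith [hDF i]
    have b2 : (∑ i ∈ Iu, (α i * u i - α i ^ 2 / Ti i))
        ≤ - ∑ i ∈ Iu, (1 / Ti i - ε i) * α i ^ 2 := by
      rw [← Finset.sum_neg_distrib]
      apply Finset.sum_le_sum
      intro i hi
      have hTi := hT i hi
      have h4 := hu i
      calc α i * u i - α i ^ 2 / Ti i ≤ ε i * α i ^ 2 - α i ^ 2 / Ti i := by linarith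
        _ = -((1 / Ti i - ε i) * α i ^ 2) := by field_simp; ring
    linarith
  · have b1 : 0 ≤ ∑ i, Ev i * ω i ^ 2 :=
      Finset.sum_nonneg fun i _ => mul_nonneg (hE i).le (sq_nonneg _)
    have b2 : 0 ≤ ∑ i ∈ Iu, (1 / Ti i - ε i) * α i ^ 2 := by
      apply Finset.sum_nonneg
      intro i hi
      have hTi := hT i hi
      have h1 : ε i < 1 / Ti i := by
        rw [lt_div_iff₀ hTi]
        exact hεT i hi
      nlinarith [sq_nonneg (α i)]
    linarith
end

section
/- With the direct feedback controller α_DF,i as defined, if ω_i = ω̄_i (the upper safe bound) then the closed-loop frequency derivative ω̇_i = -v_i + α_DF,i satisfies ω̇_i ≤ 0, and if ω_i = ω̲_i then ω̇_i ≥ 0. -/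
/-- With the direct feedback controller, at the upper safe bound `ω = ω̄` the closed-loop
frequency derivative `ω̇ = -v + α_DF(ω̄)` is nonpositive, and at `ω = ω̲` it is
nonnegative. -/
theorem stmt12 (ωlo ωloth ωhith ωhi γhi γlo v : ℝ)
    (h1 : ωlo < ωloth) (h2 : ωloth < 0) (h3 : 0 < ωhith) (h4 : ωhith < ωhi)
    (hγ1 : 0 < γhi) (hγ2 : 0 < γlo)
    (αDF : ℝ → ℝ)
    (hdef : ∀ ω, αDF ω =
      if ωhith < ω then min 0 (γhi * (ωhi - ω) / (ω - ωhith) + v)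
      else if ω < ωloth then max 0 (γlo * (ωlo - ω) / (ωloth - ω) + v)
      else 0) :
    -v + αDF ωhi ≤ 0 ∧ 0 ≤ -v + αDF ωlo := by
  constructor
  · rw [hdef, if_pos h4]
    have : γhi * (ωhi - ωhi) / (ωhi - ωhith) + v = v := by simp
    rw [this]
    rcases le_or_gt v 0 with h | h
    · simp [min_eq_right h]
    · rw [min_eq_left h.le]; linarith
  · rw [hdef, if_neg (by linarith), if_pos h1]
    have : γlo * (ωlo - ωlo) / (ωloth - ωlo) + v = v := by simp
    rw [this]
    rcases le_or_gt v 0 with h | h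
    · rw [max_eq_left (by linarith)]; linarith
    · rw [max_eq_right h.le]; linarith
end
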